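/- For the root system R of type B_n with n ≥ 2, the induced map ρ: Λ_w∨/Λ_r∨ → Λ_w/Λ_r is zero. -/

import Mathlib

/-!
Put `ε k = b k + ⋯ + b (n - 1)`. The Cartan matrix makes the `ε k` pairwise orthogonal of the
square length `ℓ` of the short simple root, and they are roots, `ε k` being the reflection of
`ε (k + 1)` in `b k`. A root `β` has integer coordinates `u k` in the `ε k`, so `|β|² = ℓ ∑ u k ²`,
and integrality of `⟨ε k, β∨⟩ = 2 u k ℓ / |β|²` leaves `|β|² ≤ 2ℓ` unless `β = ±2 ε k`, which
reducedness excludes. Hence `b 0` is a long root, `|b 0∨|² = 1`, and since `|α∨|² |α|²` is constant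
on a component, `|ε k∨|² = 2`. For a coweight `x` the `ε k`-coordinate of `φ x` is then
`x (ε k) ∈ ℤ`, so `φ x` lies in the ℤ-span of the roots `ε k`.
-/

open Module

/-- A reduced root system `R` in a real vector space `V`, together with the
`Aut(R)`-invariant inner products on `V` and on `V* = Dual ℝ V`. -/
structure RootSystemData (V : Type) [AddCommGroup V] [Module ℝ V] : Type where
  /-- the (finite) set of roots -/
  roots : Finset V
  /-- the coroot `α∨ ∈ V*` attached to a root `α` -/
  coroot : V → Module.Dual ℝ V
  span_eq_top : Submodule.span ℝ (roots : Set V) = ⊤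
  root_ne_zero : ∀ α ∈ roots, α ≠ (0 : V)
  coroot_self : ∀ α ∈ roots, coroot α α = 2
  reflect_mem : ∀ α ∈ roots, ∀ β ∈ roots, β - coroot α β • α ∈ roots
  crystallographic : ∀ α ∈ roots, ∀ β ∈ roots, ∃ n : ℤ, coroot α β = (n : ℝ)
  reduced : ∀ α ∈ roots, ∀ t : ℝ, t • α ∈ roots → t = 1 ∨ t = -1
  /-- the `Aut(R)`-invariant inner product on `V` -/
  B : V →ₗ[ℝ] V →ₗ[ℝ] ℝ
  B_symm : ∀ x y, B x y = B y x
  B_pos : ∀ x, x ≠ 0 → 0 < B x x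
  B_invariant : ∀ σ : V ≃ₗ[ℝ] V, (∀ α ∈ roots, σ α ∈ roots) →
    ∀ α ∈ roots, ∀ β ∈ roots, B (σ α) (σ β) = B α β
  coroot_eq : ∀ α ∈ roots, ∀ x : V, coroot α x = 2 * B α x / B α α
  /-- the `Aut(R)`-invariant inner product on `V*` (for the dual root system `R∨`) -/
  Bd : Module.Dual ℝ V →ₗ[ℝ] Module.Dual ℝ V →ₗ[ℝ] ℝ
  Bd_symm : ∀ x y, Bd x y = Bd y x
  Bd_pos : ∀ x, x ≠ 0 → 0 < Bd x x
  /-- the coroot of `α∨` in the dual root system `R∨` is evaluation at `α` -/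
  dual_coroot_eq : ∀ α ∈ roots, ∀ y : Module.Dual ℝ V,
    y α = 2 * Bd (coroot α) y / Bd (coroot α) (coroot α)

namespace RootSystemData

variable {V : Type} [AddCommGroup V] [Module ℝ V] (D : RootSystemData V)

/-- `x` and `y` lie in the same irreducible component of the root system. -/
def SameComponent (x y : V) : Prop :=
  Relation.ReflTransGen (fun a b => a ∈ D.roots ∧ b ∈ D.roots ∧ D.B a b ≠ 0) x y

/-- `R` is irreducible. -/
def IsIrreducible : Prop :=
  D.roots.Nonempty ∧ ∀ α ∈ D.roots, ∀ β ∈ D.roots, D.SameComponent α β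

/-- `R` is simply laced: all roots have the same length. -/
def IsSimplyLaced : Prop := ∀ α ∈ D.roots, ∀ β ∈ D.roots, D.B α α = D.B β β

/-- `α` is a root that is short within its irreducible component. -/
def ShortRoot (α : V) : Prop :=
  α ∈ D.roots ∧ ∀ β ∈ D.roots, D.SameComponent α β → D.B α α ≤ D.B β β

/-- `α∨` is a coroot that is short within its irreducible component of `R∨`
(equivalently, `α` is a long root of its component). -/
def ShortCoroot (α : V) : Prop :=
  α ∈ D.roots ∧ ∀ β ∈ D.roots, D.SameComponent α β →
    D.Bd (D.coroot α) (D.coroot α) ≤ D.Bd (D.coroot β) (D.coroot β)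

/-- normalization: short roots in every irreducible component have square-length `1`. -/
def NormalizedPrimal : Prop := ∀ α, D.ShortRoot α → D.B α α = 1

/-- normalization: short coroots in every irreducible component have square-length `1`. -/
def NormalizedDual : Prop := ∀ α, D.ShortCoroot α → D.Bd (D.coroot α) (D.coroot α) = 1

/-- the weight lattice `Λ_w ⊆ V`. -/
def weightLattice : Set V := {x | ∀ α ∈ D.roots, ∃ n : ℤ, D.coroot α x = (n : ℝ)}

/-- the root lattice `Λ_r ⊆ V`. -/
def rootLattice : AddSubgroup V := AddSubgroup.closure (D.roots : Set V)

/-- the coweight lattice `Λ_w∨ ⊆ V*`. -/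
def coweightLattice : Set (Module.Dual ℝ V) := {x | ∀ α ∈ D.roots, ∃ n : ℤ, x α = (n : ℝ)}

/-- the coroot lattice `Λ_r∨ ⊆ V*`. -/
def corootLattice : AddSubgroup (Module.Dual ℝ V) :=
  AddSubgroup.closure (D.coroot '' (D.roots : Set V))

end RootSystemData

/-- The Cartan matrix of type `B_n` (Bourbaki numbering, 0-indexed):
entry `(i, j)` is `⟨α_i, α_j∨⟩`; the last simple root `α_{n-1}` is short and
`⟨α_{n-2}, α_{n-1}∨⟩ = -2`. -/
def cartanB (n : ℕ) (i j : Fin n) : ℤ :=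
  if i = j then 2
  else if i.val + 1 = j.val ∨ j.val + 1 = i.val then
    (if i.val + 2 = n ∧ j.val + 1 = n then -2 else -1)
  else 0


namespace RootSystemData

variable {V : Type} [AddCommGroup V] [Module ℝ V] (D : RootSystemData V) {α β : V}

lemma B_self_pos (hα : α ∈ D.roots) : 0 < D.B α α :=
  D.B_pos α (D.root_ne_zero α hα)

lemma coroot_ne_zero (hα : α ∈ D.roots) : D.coroot α ≠ 0 := fun h => by
  simpa [h] using D.coroot_self α hα

lemma Bd_coroot_self_pos (hα : α ∈ D.roots) : 0 < D.Bd (D.coroot α) (D.coroot α) :=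
  D.Bd_pos _ (D.coroot_ne_zero hα)

lemma coroot_apply_mul_B_self (hα : α ∈ D.roots) (x : V) :
    D.coroot α x * D.B α α = 2 * D.B α x := by
  rw [D.coroot_eq α hα x]
  field_simp [(D.B_self_pos hα).ne']

lemma apply_mul_Bd_coroot_self (hα : α ∈ D.roots) (y : Module.Dual ℝ V) :
    y α * D.Bd (D.coroot α) (D.coroot α) = 2 * D.Bd (D.coroot α) y := by
  rw [D.dual_coroot_eq α hα y]
  field_simp [(D.Bd_coroot_self_pos hα).ne']

lemma coroot_apply_mul_B_self_comm (hα : α ∈ D.roots) (hβ : β ∈ D.roots) :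
    D.coroot β α * D.B β β = D.coroot α β * D.B α α := by
  rw [D.coroot_apply_mul_B_self hα, D.coroot_apply_mul_B_self hβ, D.B_symm]

lemma coroot_apply_mul_Bd_coroot_self_comm (hα : α ∈ D.roots) (hβ : β ∈ D.roots) :
    D.coroot β α * D.Bd (D.coroot α) (D.coroot α)
      = D.coroot α β * D.Bd (D.coroot β) (D.coroot β) := by
  rw [D.apply_mul_Bd_coroot_self hα, D.apply_mul_Bd_coroot_self hβ, D.Bd_symm]

lemma Bd_coroot_self_mul_B_self_eq (hα : α ∈ D.roots) (hβ : β ∈ D.roots) (hαβ : D.B α β ≠ 0) :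
    D.Bd (D.coroot α) (D.coroot α) * D.B α α = D.Bd (D.coroot β) (D.coroot β) * D.B β β := by
  have hα' := D.coroot_apply_mul_B_self hα β
  have hβ' := D.coroot_apply_mul_B_self hβ α
  have hBd := D.coroot_apply_mul_Bd_coroot_self_comm hα hβ
  have hne : D.coroot α β ≠ 0 := by
    rintro h
    simp [h, hαβ] at hα'
  apply mul_left_cancel₀ hne
  linear_combination D.Bd (D.coroot α) (D.coroot α) * hα' + D.B β β * hBd
    - D.Bd (D.coroot α) (D.coroot α) * hβ' + 2 * D.Bd (D.coroot α) (D.coroot α) * D.B_symm α β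

lemma SameComponent.Bd_coroot_self_mul_B_self_eq {D : RootSystemData V} (h : D.SameComponent α β) :
    D.Bd (D.coroot α) (D.coroot α) * D.B α α = D.Bd (D.coroot β) (D.coroot β) * D.B β β := by
  induction h with
  | refl => rfl
  | tail _ hr ih => exact ih.trans (D.Bd_coroot_self_mul_B_self_eq hr.1 hr.2.1 hr.2.2)

lemma shortCoroot_of_forall_B_self_le (hα : α ∈ D.roots)
    (hle : ∀ β ∈ D.roots, D.B β β ≤ D.B α α) : D.ShortCoroot α := by
  refine ⟨hα, fun β hβ hαβ => ?_⟩
  have hκ := hαβ.Bd_coroot_self_mul_B_self_eq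
  have := D.Bd_coroot_self_pos hβ
  have := D.B_self_pos hβ
  nlinarith [hle β hβ]

lemma coroot_apply_eq_apply_mul_Bd_coroot_self {φ : Module.Dual ℝ V →ₗ[ℝ] V}
    (hφ : ∀ x y : Module.Dual ℝ V, x (φ y) = 2 * D.Bd x y) (hα : α ∈ D.roots)
    (y : Module.Dual ℝ V) :
    D.coroot α (φ y) = y α * D.Bd (D.coroot α) (D.coroot α) := by
  rw [hφ, D.apply_mul_Bd_coroot_self hα]

lemma eq_zero_of_forall_B_eq_zero {S : Set V} (hS : Submodule.span ℝ S = ⊤) {z : V}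
    (hz : ∀ v ∈ S, D.B v z = 0) : z = 0 := by
  have hflip : D.B.flip z = 0 := LinearMap.ext_on hS hz
  by_contra hne
  have := D.B_pos z hne
  rw [← D.B.flip_apply z z, hflip, LinearMap.zero_apply] at this
  exact lt_irrefl 0 this

end RootSystemData

lemma exists_sq_eq_four_of_sum_sq_dvd {ι : Type*} [DecidableEq ι] (s : Finset ι) (u : ι → ℤ)
    (hdvd : ∀ k ∈ s, (∑ i ∈ s, u i ^ 2) ∣ 2 * u k) (h3 : 3 ≤ ∑ i ∈ s, u i ^ 2) :
    ∃ k ∈ s, u k ^ 2 = 4 ∧ ∀ i ∈ s.erase k, u i = 0 := by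
  set q := ∑ i ∈ s, u i ^ 2
  obtain ⟨k, hk, hne⟩ : ∃ k ∈ s, u k ≠ 0 := by
    by_contra! h
    have : q = 0 := Finset.sum_eq_zero fun i hi => by simp [h i hi]
    omega
  have hsplit : u k ^ 2 + ∑ i ∈ s.erase k, u i ^ 2 = q :=
    Finset.add_sum_erase s (fun i => u i ^ 2) hk
  have hrest : 0 ≤ ∑ i ∈ s.erase k, u i ^ 2 := Finset.sum_nonneg fun i _ => sq_nonneg (u i)
  have hq_le : q ≤ |2 * u k| :=
    Int.le_of_dvd (abs_pos.2 (by omega)) ((dvd_abs _ _).2 (hdvd k hk))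
  rw [abs_mul, abs_two] at hq_le
  rw [← sq_abs (u k)] at hsplit
  have habs : |u k| = 2 := by
    have : 2 ≤ |u k| := by omega
    nlinarith
  rw [habs] at hsplit
  refine ⟨k, hk, by rw [← sq_abs, habs]; norm_num, fun i hi => ?_⟩
  have hzero : ∑ i ∈ s.erase k, u i ^ 2 = 0 := by omega
  exact pow_eq_zero_iff two_ne_zero |>.1 <|
    (Finset.sum_eq_zero_iff_of_nonneg fun i _ => sq_nonneg (u i)).1 hzero i hi

def gramB (n i j : ℕ) : ℤ :=
  if i = j then (if i + 1 = n then 1 else 2) else if i + 1 = j ∨ j + 1 = i then -1 else 0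

lemma cartanB_mul_eq_gramB {n i j : ℕ} (hi : i < n) (hj : j < n) :
    cartanB n ⟨i, hi⟩ ⟨j, hj⟩ * (if j + 1 = n then 1 else 2) = 2 * gramB n i j := by
  unfold cartanB gramB
  simp only [Fin.mk.injEq]
  split_ifs <;> omega

lemma cartanB_self_succ {n j : ℕ} (hj : j < n) (hj' : j + 1 < n) :
    cartanB n ⟨j, hj⟩ ⟨j + 1, hj'⟩ = if j + 2 = n then -2 else -1 := by
  unfold cartanB
  grind

lemma cartanB_succ_self {n j : ℕ} (hj' : j + 1 < n) (hj : j < n) :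
    cartanB n ⟨j + 1, hj'⟩ ⟨j, hj⟩ = -1 := by
  unfold cartanB
  grind

lemma sum_Ico_gramB {n j k : ℕ} (hj : j < n) (hk : k < n) :
    ∑ i ∈ Finset.Ico k n, gramB n i j
      = (if k = j then 1 else 0) - (if k = j + 1 then 1 else 0) := by
  induction Nat.le_sub_one_of_lt hk using Nat.decreasingInduction with
  | self =>
    rw [Nat.Ico_pred_singleton (by omega), Finset.sum_singleton]
    unfold gramB
    split_ifs <;> omega
  | of_succ k hk' ih =>
    rw [Finset.sum_eq_sum_Ico_succ_bot (by omega), ih (by omega)]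
    unfold gramB
    split_ifs <;> omega

/-- In the standard realization of `B_n`, `b j = ε j - ε (j + 1)` for `j < n - 1` and
`b (n - 1) = ε (n - 1)`, so that `ε k = ∑_{k ≤ j < n} b j`. -/
def epsB {V : Type} [AddCommGroup V] (n : ℕ) (b : ℕ → V) (k : ℕ) : V :=
  ∑ j ∈ Finset.Ico k n, b j

lemma epsB_self {V : Type} [AddCommGroup V] (n : ℕ) (b : ℕ → V) : epsB n b n = 0 := by
  simp [epsB]

lemma epsB_eq_add {V : Type} [AddCommGroup V] {n k : ℕ} (b : ℕ → V) (hk : k < n) :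
    epsB n b k = b k + epsB n b (k + 1) :=
  Finset.sum_eq_sum_Ico_succ_bot hk b

namespace RootSystemData

variable {V : Type} [AddCommGroup V] [Module ℝ V]

structure IsTypeBBase (D : RootSystemData V) (n : ℕ) (b : ℕ → V) : Prop where
  mem_roots : ∀ i < n, b i ∈ D.roots
  coroot_apply : ∀ i j (hi : i < n) (hj : j < n), D.coroot (b j) (b i) = cartanB n ⟨i, hi⟩ ⟨j, hj⟩

namespace IsTypeBBase

variable {D : RootSystemData V} {n : ℕ} {b : ℕ → V} (hB : D.IsTypeBBase n b)
include hB

local notation "ℓ" => D.B (b (n - 1)) (b (n - 1))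

lemma B_last_self_pos (hn : 0 < n) : 0 < ℓ :=
  D.B_self_pos (hB.mem_roots _ (by omega))

lemma B_self {j : ℕ} (hj : j < n) : D.B (b j) (b j) = (if j + 1 = n then 1 else 2) * ℓ := by
  induction Nat.le_sub_one_of_lt hj using Nat.decreasingInduction with
  | self => simp [show n - 1 + 1 = n by omega]
  | of_succ j hj' ih =>
    have hsymm := D.coroot_apply_mul_B_self_comm (hB.mem_roots j (by omega))
      (hB.mem_roots (j + 1) (by omega))
    rw [hB.coroot_apply j (j + 1) (by omega) (by omega),
      hB.coroot_apply (j + 1) j (by omega) (by omega), ih (by omega)] at hsymm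
    rw [cartanB_succ_self, cartanB_self_succ] at hsymm
    split_ifs at hsymm ⊢ <;> first | omega | (push_cast at hsymm; linarith)

lemma B_eq_gramB {i j : ℕ} (hi : i < n) (hj : j < n) : D.B (b i) (b j) = gramB n i j * ℓ := by
  have h := D.coroot_apply_mul_B_self (hB.mem_roots j hj) (b i)
  rw [hB.coroot_apply i j hi hj, hB.B_self hj] at h
  have hg := congrArg (fun m : ℤ => (m : ℝ)) (cartanB_mul_eq_gramB hi hj)
  push_cast at hg
  rw [D.B_symm]
  linear_combination (-1 / 2 : ℝ) * h + (ℓ / 2) * hg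

lemma B_epsB_apply {k j : ℕ} (hk : k < n) (hj : j < n) :
    D.B (epsB n b k) (b j)
      = (((if k = j then 1 else 0) - (if k = j + 1 then 1 else 0) : ℤ) : ℝ) * ℓ := by
  rw [← sum_Ico_gramB hj hk, epsB, map_sum, LinearMap.sum_apply, Int.cast_sum, Finset.sum_mul]
  exact Finset.sum_congr rfl fun i hi => hB.B_eq_gramB (Finset.mem_Ico.1 hi).2 hj

lemma B_epsB_epsB {k l : ℕ} (hk : k < n) (hl : l ≤ n) :
    D.B (epsB n b k) (epsB n b l) = if k = l then ℓ else 0 := by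
  induction hl using Nat.decreasingInduction with
  | self => simp [epsB_self, hk.ne]
  | of_succ l hl ih =>
    rw [epsB_eq_add b hl, map_add, hB.B_epsB_apply hk hl, ih]
    split_ifs <;> first | omega | simp

lemma coroot_apply_epsB_succ (hn : 0 < n) {j : ℕ} (hj : j + 1 < n) :
    D.coroot (b j) (epsB n b (j + 1)) = -1 := by
  have h := D.coroot_apply_mul_B_self (hB.mem_roots j (by omega)) (epsB n b (j + 1))
  rw [hB.B_self (by omega), if_neg (by omega), D.B_symm (b j), hB.B_epsB_apply hj (by omega)] at h
  have := hB.B_last_self_pos hn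
  simp only [add_eq_left, one_ne_zero, if_false, if_true] at h
  push_cast at h
  nlinarith

lemma epsB_mem_roots {k : ℕ} (hk : k < n) : epsB n b k ∈ D.roots := by
  induction Nat.le_sub_one_of_lt hk using Nat.decreasingInduction with
  | self =>
    rw [epsB_eq_add b (by omega), Nat.sub_add_cancel (by omega), epsB_self, add_zero]
    exact hB.mem_roots _ (by omega)
  | of_succ k hk' ih =>
    have h := D.reflect_mem _ (hB.mem_roots k (by omega)) _ (ih (by omega))
    rwa [hB.coroot_apply_epsB_succ (by omega) (by omega), neg_one_smul, sub_neg_eq_add, add_comm,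
      ← epsB_eq_add b (by omega)] at h

lemma exists_B_epsB_eq_int_mul
    (hgen : ∀ α ∈ D.roots, α ∈ AddSubgroup.closure (b '' Set.Iio n)) {α : V} (hα : α ∈ D.roots) :
    ∃ u : ℕ → ℤ, ∀ k < n, D.B (epsB n b k) α = u k * ℓ := by
  have hint : ∀ k < n, D.B (epsB n b k) α ∈ AddSubgroup.zmultiples ℓ := by
    intro k hk
    refine AddSubgroup.closure_le
      ((AddSubgroup.zmultiples ℓ).comap (D.B (epsB n b k)).toAddMonoidHom) |>.2 ?_ (hgen α hα)
    rintro _ ⟨j, hj, rfl⟩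
    rw [SetLike.mem_coe, AddSubgroup.mem_comap, LinearMap.toAddMonoidHom_coe,
      hB.B_epsB_apply hk hj]
    exact AddSubgroup.intCast_mul_mem_zmultiples _ _
  choose! u hu using fun k hk => AddSubgroup.mem_zmultiples_iff.1 (hint k hk)
  exact ⟨u, fun k hk => by rw [← hu k hk, zsmul_eq_mul]⟩

lemma eq_sum_epsB (hspan : Submodule.span ℝ (b '' Set.Iio n) = ⊤) (y : V) :
    y = ∑ k ∈ Finset.range n, (D.B (epsB n b k) y / ℓ) • epsB n b k := by
  rw [← sub_eq_zero]
  set z := y - ∑ k ∈ Finset.range n, (D.B (epsB n b k) y / ℓ) • epsB n b k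
  have hz : ∀ l ≤ n, D.B (epsB n b l) z = 0 := by
    intro l hl
    rcases hl.lt_or_eq with hl | rfl
    · have hsum : ∀ k ∈ Finset.range n, D.B (epsB n b l) ((D.B (epsB n b k) y / ℓ) • epsB n b k)
          = if l = k then D.B (epsB n b k) y else 0 := by
        intro k hk
        rw [map_smul, hB.B_epsB_epsB hl (Finset.mem_range.1 hk).le, smul_eq_mul]
        split_ifs
        · exact div_mul_cancel₀ _ (hB.B_last_self_pos (by omega)).ne'
        · exact mul_zero _
      rw [map_sub, map_sum, Finset.sum_congr rfl hsum, Finset.sum_ite_eq,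
        if_pos (Finset.mem_range.2 hl), sub_self]
    · rw [epsB_self, map_zero, LinearMap.zero_apply]
  clear_value z
  refine D.eq_zero_of_forall_B_eq_zero hspan ?_
  rintro _ ⟨j, hj, rfl⟩
  rw [eq_sub_of_add_eq (epsB_eq_add b hj).symm, LinearMap.map_sub₂, hz j hj.le, hz (j + 1) hj,
    sub_self]

lemma B_self_eq_sum_sq (hspan : Submodule.span ℝ (b '' Set.Iio n) = ⊤) (y : V) :
    D.B y y = (∑ k ∈ Finset.range n, (D.B (epsB n b k) y / ℓ) ^ 2) * ℓ := by
  nth_rewrite 1 [hB.eq_sum_epsB hspan y]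
  rw [map_sum, LinearMap.sum_apply, Finset.sum_mul]
  refine Finset.sum_congr rfl fun k hk => ?_
  have := hB.B_last_self_pos (Finset.mem_range.1 hk).pos
  rw [map_smul, LinearMap.smul_apply, smul_eq_mul]
  field_simp

lemma B_self_le (hspan : Submodule.span ℝ (b '' Set.Iio n) = ⊤)
    (hgen : ∀ α ∈ D.roots, α ∈ AddSubgroup.closure (b '' Set.Iio n)) (hn : 0 < n)
    {β : V} (hβ : β ∈ D.roots) : D.B β β ≤ 2 * ℓ := by
  have hℓ := hB.B_last_self_pos hn
  obtain ⟨u, hu⟩ := hB.exists_B_epsB_eq_int_mul hgen hβ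
  have hcoord : ∀ k ∈ Finset.range n, D.B (epsB n b k) β / ℓ = u k := fun k hk => by
    rw [hu k (Finset.mem_range.1 hk), mul_div_cancel_right₀ _ hℓ.ne']
  set q := ∑ k ∈ Finset.range n, u k ^ 2
  have hβq : D.B β β = q * ℓ := by
    rw [hB.B_self_eq_sum_sq hspan, Finset.sum_congr rfl fun k hk => by rw [hcoord k hk]]
    simp only [q, Int.cast_sum, Int.cast_pow]
  have hdvd : ∀ k ∈ Finset.range n, q ∣ 2 * u k := by
    intro k hk
    obtain ⟨m, hm⟩ := D.crystallographic β hβ _ (hB.epsB_mem_roots (Finset.mem_range.1 hk))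
    have h := D.coroot_apply_mul_B_self hβ (epsB n b k)
    rw [hm, hβq, D.B_symm β, hu k (Finset.mem_range.1 hk)] at h
    have h' : ((2 * u k : ℤ) : ℝ) * ℓ = ((q * m : ℤ) : ℝ) * ℓ := by
      push_cast
      linear_combination -h
    exact ⟨m, by exact_mod_cast mul_right_cancel₀ hℓ.ne' h'⟩
  by_contra! hlt
  rw [hβq] at hlt
  have h3 : 3 ≤ q := by
    have : (2 : ℝ) < q := lt_of_mul_lt_mul_right hlt hℓ.le
    exact_mod_cast this
  obtain ⟨k, hk, hk4, hzero⟩ := exists_sq_eq_four_of_sum_sq_dvd _ u hdvd h3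
  have hβk : β = (u k : ℝ) • epsB n b k := by
    rw [hB.eq_sum_epsB hspan β, Finset.sum_congr rfl fun k hk => by rw [hcoord k hk]]
    refine Finset.sum_eq_single_of_mem k hk fun i hi hik => ?_
    rw [hzero i (Finset.mem_erase.2 ⟨hik, hi⟩), Int.cast_zero, zero_smul]
  have hk1 : (u k : ℝ) ^ 2 = 1 := by
    rcases D.reduced _ (hB.epsB_mem_roots (Finset.mem_range.1 hk)) _ (hβk ▸ hβ) with h | h <;>
      simp [h]
  have : ((4 : ℤ) : ℝ) = 1 := by rw [← hk4]; push_cast; exact hk1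
  norm_num at this

lemma sameComponent_epsB (hn : 0 < n) {k : ℕ} (hk : k < n) :
    D.SameComponent (b 0) (epsB n b k) := by
  have hℓ := (hB.B_last_self_pos hn).ne'
  induction k with
  | zero =>
    refine Relation.ReflTransGen.single ⟨hB.mem_roots 0 hn, hB.epsB_mem_roots hn, ?_⟩
    rw [D.B_symm, hB.B_epsB_apply hn hn]
    simpa using hℓ
  | succ k ih =>
    refine ((ih (by omega)).tail ⟨hB.epsB_mem_roots (by omega), hB.mem_roots k (by omega), ?_⟩).tail
      ⟨hB.mem_roots k (by omega), hB.epsB_mem_roots hk, ?_⟩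
    · rw [hB.B_epsB_apply (by omega) (by omega)]
      simpa using hℓ
    · rw [D.B_symm, hB.B_epsB_apply hk (by omega)]
      simpa using hℓ

lemma shortCoroot_zero (hspan : Submodule.span ℝ (b '' Set.Iio n) = ⊤)
    (hgen : ∀ α ∈ D.roots, α ∈ AddSubgroup.closure (b '' Set.Iio n)) (hn : 2 ≤ n) :
    D.ShortCoroot (b 0) :=
  D.shortCoroot_of_forall_B_self_le (hB.mem_roots 0 (by omega)) fun _ hβ => by
    rw [hB.B_self (by omega), if_neg (by omega)]
    exact hB.B_self_le hspan hgen (by omega) hβ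

lemma Bd_coroot_epsB (hspan : Submodule.span ℝ (b '' Set.Iio n) = ⊤)
    (hgen : ∀ α ∈ D.roots, α ∈ AddSubgroup.closure (b '' Set.Iio n)) (hn : 2 ≤ n)
    (hnorm : D.NormalizedDual) {k : ℕ} (hk : k < n) :
    D.Bd (D.coroot (epsB n b k)) (D.coroot (epsB n b k)) = 2 := by
  have h := (hB.sameComponent_epsB (by omega) hk).Bd_coroot_self_mul_B_self_eq
  rw [hnorm _ (hB.shortCoroot_zero hspan hgen hn), hB.B_self (by omega), if_neg (by omega),
    hB.B_epsB_epsB hk hk.le, if_pos rfl] at h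
  have := hB.B_last_self_pos (by omega)
  nlinarith

lemma B_epsB_phi_apply {φ : Module.Dual ℝ V →ₗ[ℝ] V}
    (hφ : ∀ x y : Module.Dual ℝ V, x (φ y) = 2 * D.Bd x y) {k : ℕ} (hk : k < n)
    (hBd : D.Bd (D.coroot (epsB n b k)) (D.coroot (epsB n b k)) = 2) (x : Module.Dual ℝ V) :
    D.B (epsB n b k) (φ x) = x (epsB n b k) * ℓ := by
  have h := D.coroot_apply_mul_B_self (hB.epsB_mem_roots hk) (φ x)
  rw [D.coroot_apply_eq_apply_mul_Bd_coroot_self hφ (hB.epsB_mem_roots hk), hBd,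
    hB.B_epsB_epsB hk hk.le, if_pos rfl] at h
  linarith

end IsTypeBBase

end RootSystemData

theorem stmt7_general {V : Type} [AddCommGroup V] [Module ℝ V]
    (D : RootSystemData V)
    (hnormVd : D.NormalizedDual)
    (φ : Module.Dual ℝ V →ₗ[ℝ] V)
    (hφ : ∀ x y : Module.Dual ℝ V, x (φ y) = 2 * D.Bd x y)
    (n : ℕ) (hn : 2 ≤ n)
    -- a base of simple roots of type `B_n`
    (b : Fin n → V) (hb : ∀ i, b i ∈ D.roots)
    (hspan : Submodule.span ℝ (Set.range b) = ⊤)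
    (hgen : ∀ α ∈ D.roots, α ∈ AddSubgroup.closure (Set.range b))
    (hcartan : ∀ i j, D.coroot (b j) (b i) = ((cartanB n i j : ℤ) : ℝ)) :
    ∀ x ∈ D.coweightLattice, φ x ∈ D.rootLattice := by
  intro x hx
  set c : ℕ → V := fun j => if h : j < n then b ⟨j, h⟩ else 0
  have hc : ∀ j (hj : j < n), c j = b ⟨j, hj⟩ := fun j hj => dif_pos hj
  have hsub : Set.range b ⊆ c '' Set.Iio n := by
    rintro _ ⟨i, rfl⟩
    exact ⟨i, i.isLt, hc i i.isLt⟩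
  have hB : D.IsTypeBBase n c :=
    ⟨fun i hi => hc i hi ▸ hb _, fun i j hi hj => by rw [hc i hi, hc j hj, hcartan]⟩
  have hspan' : Submodule.span ℝ (c '' Set.Iio n) = ⊤ :=
    top_unique (hspan ▸ Submodule.span_mono hsub)
  have hgen' : ∀ α ∈ D.roots, α ∈ AddSubgroup.closure (c '' Set.Iio n) :=
    fun α hα => AddSubgroup.closure_mono hsub (hgen α hα)
  rw [hB.eq_sum_epsB hspan' (φ x)]
  refine AddSubgroup.sum_mem _ fun k hk => ?_
  rw [Finset.mem_range] at hk
  obtain ⟨m, hm⟩ := hx _ (hB.epsB_mem_roots hk)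
  rw [hB.B_epsB_phi_apply hφ hk (hB.Bd_coroot_epsB hspan' hgen' hn hnormVd hk), hm,
    mul_div_cancel_right₀ _ (hB.B_last_self_pos (by omega)).ne', Int.cast_smul_eq_zsmul]
  exact zsmul_mem (AddSubgroup.subset_closure (hB.epsB_mem_roots hk)) m

/-- For `R` of type `B_n`, `n ≥ 2`, the induced map
`ρ : Λ_w∨/Λ_r∨ → Λ_w/Λ_r` is zero, i.e. `φ` maps the coweight lattice into
the root lattice. -/
theorem stmt7 {V : Type} [AddCommGroup V] [Module ℝ V] [FiniteDimensional ℝ V]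
    (D : RootSystemData V)
    (hnormV : D.NormalizedPrimal) (hnormVd : D.NormalizedDual)
    (φ : Module.Dual ℝ V →ₗ[ℝ] V)
    (hφ : ∀ x y : Module.Dual ℝ V, x (φ y) = 2 * D.Bd x y)
    (n : ℕ) (hn : 2 ≤ n)
    -- a base of simple roots of type `B_n`
    (b : Fin n → V) (hb : ∀ i, b i ∈ D.roots)
    (hlin : LinearIndependent ℝ b)
    (hspan : Submodule.span ℝ (Set.range b) = ⊤)
    (hgen : ∀ α ∈ D.roots, α ∈ AddSubgroup.closure (Set.range b))
    (hcartan : ∀ i j, D.coroot (b j) (b i) = ((cartanB n i j : ℤ) : ℝ)) :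
    ∀ x ∈ D.coweightLattice, φ x ∈ D.rootLattice :=
  stmt7_general D hnormVd φ hφ n hn b hb hspan hgen hcartan
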